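/- Let G be a benzenoid system with a perfect matching, let Q be an induced convex subgraph of R(G) isomorphic to Q_{k,l} with vertices identified with tuples as in the standard representation. For i ∈ {k+1,…,k+l} let N^i be the vertex with 1 in position i and 0 elsewhere, O^i the vertex with 2 in position i and 0 elsewhere, and h_i' the hexagon of G with N^i ⊕ O^i = E(h_i'). Then for all distinct i, j ∈ {k+1,…,k+l}, the hexagons h_i' and h_j' are vertex-disjoint. -/

import Mathlib

open scoped symmDiff

namespace GZZ

/-! ### Cells (hexagonal faces) of the hexagonal lattice in "brick wall" coordinates.

A vertex of the hexagonal lattice is a pair `(x, y) : ℤ × ℤ`; horizontal edges join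
`(x, y)` and `(x + 1, y)`, and vertical edges join `(x, y)` and `(x, y + 1)` for `x + y` even.
The hexagonal faces of the lattice are indexed by their lower-left vertex `c`
(with `c.1 + c.2` even). -/

abbrev V2 := ℤ × ℤ

/-- The six vertices of the hexagonal face with lower-left corner `c`. -/
def cellVerts (c : V2) : Set V2 :=
  {(c.1, c.2), (c.1 + 1, c.2), (c.1 + 2, c.2),
   (c.1, c.2 + 1), (c.1 + 1, c.2 + 1), (c.1 + 2, c.2 + 1)}

/-- The six edges of the hexagonal face with lower-left corner `c`. -/
def cellEdges (c : V2) : Set (Sym2 V2) :=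
  {s((c.1, c.2), (c.1 + 1, c.2)), s((c.1 + 1, c.2), (c.1 + 2, c.2)),
   s((c.1, c.2 + 1), (c.1 + 1, c.2 + 1)), s((c.1 + 1, c.2 + 1), (c.1 + 2, c.2 + 1)),
   s((c.1, c.2), (c.1, c.2 + 1)), s((c.1 + 2, c.2), (c.1 + 2, c.2 + 1))}

/-- Two hexagonal faces are adjacent when they share an edge. -/
def cellAdj (c d : V2) : Prop :=
  (d.1 - c.1, d.2 - c.2) ∈ ({(2, 0), (-2, 0), (1, 1), (1, -1), (-1, 1), (-1, -1)} : Set V2)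

/-- A set of hexagonal faces is connected (via sharing edges). -/
def CellConnected (S : Set V2) : Prop :=
  ∀ c ∈ S, ∀ d ∈ S, Relation.ReflTransGen (fun a b => a ∈ S ∧ b ∈ S ∧ cellAdj a b) c d

/-- A benzenoid system, given by its (finite, nonempty) set `B` of hexagonal faces:
the faces form a connected set and the complement has no holes (it is connected),
which is exactly the condition that `B` consists of all hexagons lying in the region
bounded by a cycle of the hexagonal lattice. -/
def IsBenzenoid (B : Set V2) : Prop :=
  B.Finite ∧ B.Nonempty ∧ (∀ c ∈ B, Even (c.1 + c.2)) ∧ CellConnected B ∧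
    CellConnected {c : V2 | Even (c.1 + c.2) ∧ c ∉ B}

section Generic

/-! ### Perfect matchings, resonance graphs and generalized Clar covers,
generically in a system of hexagonal cells `B` with vertex sets `cv` and edge sets `ce`. -/

variable {V C : Type*} (cv : C → Set V) (ce : C → Set (Sym2 V)) (B : Set C)

/-- The vertices of the system with cell set `B`. -/
def sysVerts : Set V := ⋃ c ∈ B, cv c

/-- The edges of the system with cell set `B`. -/
def sysEdges : Set (Sym2 V) := ⋃ c ∈ B, ce c

/-- A perfect matching: a set of pairwise non-incident edges of the system
covering all vertices of the system. -/
def IsPM (M : Set (Sym2 V)) : Prop :=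
  M ⊆ sysEdges ce B ∧
    (∀ e ∈ M, ∀ f ∈ M, e ≠ f → ∀ v : V, v ∈ e → v ∉ f) ∧
    (∀ v ∈ sysVerts cv B, ∃ e ∈ M, v ∈ e)

/-- The type of perfect matchings of the system. -/
abbrev PM := {M : Set (Sym2 V) // IsPM cv ce B M}

/-- The resonance graph: vertices are the perfect matchings, two perfect matchings
being adjacent whenever their symmetric difference is the edge set of a hexagon. -/
def resGraph : SimpleGraph (PM cv ce B) where
  Adj M N := M ≠ N ∧ ∃ c ∈ B, (M.val ∆ N.val) = ce c
  symm := by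
    constructor
    rintro M N ⟨hne, c, hc, hd⟩
    exact ⟨hne.symm, c, hc, by rwa [symmDiff_comm]⟩
  loopless := ⟨fun M h => h.1 rfl⟩

/-- The connected component (vertex set) of `v` in the spanning subgraph with edge set `E'`. -/
def compSet (E' : Set (Sym2 V)) (v : V) : Set V :=
  {w | (SimpleGraph.fromEdgeSet E').Reachable v w}

/-- The component of `v` in the spanning subgraph with edge set `E'` is a single edge `K₂`. -/
def IsK2Comp (E' : Set (Sym2 V)) (v : V) : Prop :=
  ∃ u w : V, u ≠ w ∧ s(u, w) ∈ E' ∧ compSet E' v = {u, w}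

/-- The component of `v` in the spanning subgraph with edge set `E'` is a cycle `Cₙ`. -/
def IsCycComp (n : ℕ) [NeZero n] (E' : Set (Sym2 V)) (v : V) : Prop :=
  ∃ c : ZMod n → V, Function.Injective c ∧ compSet E' v = Set.range c ∧
    (∀ i : ZMod n, s(c i, c (i + 1)) ∈ E') ∧
    (∀ e ∈ E', (∀ u, u ∈ e → u ∈ Set.range c) → ∃ i : ZMod n, e = s(c i, c (i + 1)))

/-- The number of `Cₙ`-components of the spanning subgraph with edge set `E'`. -/
noncomputable def numCyc (n : ℕ) [NeZero n] (Vs : Set V) (E' : Set (Sym2 V)) : ℕ :=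
  Set.ncard {S : Set V | ∃ v ∈ Vs, IsCycComp n E' v ∧ S = compSet E' v}

/-- A generalized Clar cover: a spanning subgraph (given by its edge set `E'`) of the
system each of whose connected components is a `C₆`, a `C₁₀` or a `K₂`. -/
def IsGenClarCover (E' : Set (Sym2 V)) : Prop :=
  E' ⊆ sysEdges ce B ∧
    ∀ v ∈ sysVerts cv B, IsK2Comp E' v ∨ IsCycComp 6 E' v ∨ IsCycComp 10 E' v

/-- `gz B k l`: the number of generalized Clar covers with exactly `k` components `C₆`
and `l` components `C₁₀`. -/
noncomputable def gz (k l : ℕ) : ℕ :=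
  Set.ncard {E' : Set (Sym2 V) | IsGenClarCover cv ce B E' ∧
    numCyc 6 (sysVerts cv B) E' = k ∧ numCyc 10 (sysVerts cv B) E' = l}

/-- The set of vertices of the resonance graph assigned by the map `f_{k,l}` to a
generalized Clar cover `E'`: all perfect matchings `M` such that `|M ∩ E(c)| = 3` for every
`C₆`-component (a hexagon) `c` of `E'`, `|M ∩ (E(h₁) ∪ E(h₂))| = 5` for every
`C₁₀`-component of `E'` formed by two hexagons `h₁, h₂`, and every `K₂`-component edge
of `E'` belongs to `M`. -/
def fSet (E' : Set (Sym2 V)) : Set (PM cv ce B) :=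
  {M | (∀ v ∈ sysVerts cv B, IsCycComp 6 E' v → ∀ h ∈ B, compSet E' v = cv h →
          Set.ncard (M.val ∩ ce h) = 3) ∧
       (∀ v ∈ sysVerts cv B, IsCycComp 10 E' v → ∀ h₁ ∈ B, ∀ h₂ ∈ B, h₁ ≠ h₂ →
          compSet E' v = cv h₁ ∪ cv h₂ →
          Set.ncard (M.val ∩ (ce h₁ ∪ ce h₂)) = 5) ∧
       (∀ u w : V, s(u, w) ∈ E' → compSet E' u = {u, w} → s(u, w) ∈ M.val)}

end Generic

/-! ### The graphs `Q_{k,l}` and the generalized cube polynomial. -/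

/-- The Cartesian (box) product of `n` copies of a graph `G`. -/
def boxPow {α : Type*} (G : SimpleGraph α) : (n : ℕ) → SimpleGraph (Fin n → α)
  | 0 => ⊥
  | n + 1 =>
    SimpleGraph.comap (fun f => (fun i => f i.castSucc, f (Fin.last n)))
      ((boxPow G n).boxProd G)

/-- The graph `Q_{k,l} = P₂^k □ P₃^l`. -/
def QGraph (k l : ℕ) : SimpleGraph ((Fin k → Fin 2) × (Fin l → Fin 3)) :=
  (boxPow (SimpleGraph.pathGraph 2) k).boxProd (boxPow (SimpleGraph.pathGraph 3) l)

/-- A set of vertices is convex if every shortest path between two of its vertices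
stays inside it. -/
def IsConvex {W : Type*} (G : SimpleGraph W) (S : Set W) : Prop :=
  ∀ u v : W, u ∈ S → v ∈ S → ∀ p : G.Walk u v, p.IsPath → p.length = G.dist u v →
    ∀ w ∈ p.support, w ∈ S

/-- `alphaQ G k l`: the number of induced convex subgraphs of `G` isomorphic to `Q_{k,l}`. -/
noncomputable def alphaQ {W : Type*} (G : SimpleGraph W) (k l : ℕ) : ℕ :=
  Set.ncard {S : Set W | IsConvex G S ∧ Nonempty (G.induce S ≃g QGraph k l)}

end GZZ
namespace GZZ

/-- The "tuple" description of `Q_{k,l}`: vertices are tuples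
`(b₁, …, b_k, b_{k+1}, …, b_{k+l})` with `bᵢ ∈ {0,1}` for `i ≤ k` and `bᵢ ∈ {0,1,2}` for
`i > k`, two tuples being adjacent iff they differ by exactly `1` in exactly one
coordinate. -/
def tupleGraph (k l : ℕ) : SimpleGraph ((Fin k → Fin 2) × (Fin l → Fin 3)) where
  Adj p q :=
    (∃ i : Fin k, ((p.1 i : ℕ) = (q.1 i : ℕ) + 1 ∨ (q.1 i : ℕ) = (p.1 i : ℕ) + 1) ∧
      (∀ j : Fin k, j ≠ i → p.1 j = q.1 j) ∧ p.2 = q.2) ∨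
    (∃ i : Fin l, ((p.2 i : ℕ) = (q.2 i : ℕ) + 1 ∨ (q.2 i : ℕ) = (p.2 i : ℕ) + 1) ∧
      (∀ j : Fin l, j ≠ i → p.2 j = q.2 j) ∧ p.1 = q.1)
  symm := by
    constructor
    rintro p q (⟨i, hd, hj, h2⟩ | ⟨i, hd, hj, h2⟩)
    · exact Or.inl ⟨i, hd.symm, fun j hji => (hj j hji).symm, h2.symm⟩
    · exact Or.inr ⟨i, hd.symm, fun j hji => (hj j hji).symm, h2.symm⟩
  loopless := by
    constructor
    rintro p (⟨i, hd, -, -⟩ | ⟨i, hd, -, -⟩) <;> omega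

end GZZ

/-!
Inside `Q`, the matchings whose coordinates vanish outside positions `i` and `j` form a
`3 × 3` grid `P₃ □ P₃` in the resonance graph. In a 4-cycle of the resonance graph opposite
edges carry the same hexagon: the four hexagons have edge sets with empty symmetric difference,
and a hexagon shares at most one edge with any other hexagon, so its six edges cannot be
covered by three others. Moving `h_i'` and `h_j'` across the grid squares yields a path
`M₁ M₂ M₃ M₄` of the resonance graph whose edges carry `h_j'`, `h_i'`, `h_j'`. Now `M₂` and
`M₃` both alternate around `h_j'` and differ exactly on `h_i'`. If the two hexagons met, they
would share an edge `e`, and the edge `f ≠ e` of `h_j'` next to `e` is not an edge of `h_i'`;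
so `e` changes membership between `M₂` and `M₃` while `f` does not, against alternation.
-/

namespace GZZ

open Set SimpleGraph

theorem _root_.Sym2.eq_mk_of_forall_mem_eq_or_eq {α : Type*} {z : Sym2 α} {p q : α}
    (hz : ¬z.IsDiag) (h : ∀ v ∈ z, v = p ∨ v = q) : z = s(p, q) := by
  induction z using Sym2.ind with
  | _ a b =>
    rw [Sym2.mk_isDiag_iff] at hz
    rcases h a (Sym2.mem_mk_left a b) with rfl | rfl <;>
      rcases h b (Sym2.mem_mk_right a b) with rfl | rfl
    exacts [absurd rfl hz, rfl, Sym2.eq_swap, absurd rfl hz]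

lemma mem_cellVerts {c v : V2} :
    v ∈ cellVerts c ↔ c.1 ≤ v.1 ∧ v.1 ≤ c.1 + 2 ∧ c.2 ≤ v.2 ∧ v.2 ≤ c.2 + 1 := by
  obtain ⟨v1, v2⟩ := v
  simp only [cellVerts, mem_insert_iff, mem_singleton_iff, Prod.mk.injEq]
  omega

lemma mem_cellVerts_of_mem_cellEdges {c v : V2} {e : Sym2 V2} (he : e ∈ cellEdges c)
    (hv : v ∈ e) : v ∈ cellVerts c := by
  simp only [cellEdges, mem_insert_iff, mem_singleton_iff] at he
  rcases he with rfl | rfl | rfl | rfl | rfl | rfl <;>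
    rcases Sym2.mem_iff.mp hv with rfl | rfl <;> simp [cellVerts]

lemma not_isDiag_of_mem_cellEdges {c : V2} {e : Sym2 V2} (he : e ∈ cellEdges c) :
    ¬e.IsDiag := by
  simp only [cellEdges, mem_insert_iff, mem_singleton_iff] at he
  rcases he with rfl | rfl | rfl | rfl | rfl | rfl <;> simp [Prod.ext_iff]

lemma ncard_cellEdges (c : V2) : (cellEdges c).ncard = 6 := by
  rw [cellEdges, ncard_insert_of_notMem, ncard_insert_of_notMem, ncard_insert_of_notMem,
    ncard_insert_of_notMem, ncard_pair] <;> simp [Prod.ext_iff]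

lemma exists_adjacent_mem_cellEdges {c : V2} {e : Sym2 V2} (he : e ∈ cellEdges c) :
    ∃ f ∈ cellEdges c, f ≠ e ∧ ∃ v ∈ e, v ∈ f := by
  obtain ⟨c1, c2⟩ := c
  simp only [cellEdges, mem_insert_iff, mem_singleton_iff] at he
  rcases he with rfl | rfl | rfl | rfl | rfl | rfl
  exacts [⟨s((c1 + 1, c2), (c1 + 2, c2)), by simp [cellEdges], by simp, (c1 + 1, c2), by simp⟩,
    ⟨s((c1, c2), (c1 + 1, c2)), by simp [cellEdges], by simp, (c1 + 1, c2), by simp⟩,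
    ⟨s((c1 + 1, c2 + 1), (c1 + 2, c2 + 1)), by simp [cellEdges], by simp, (c1 + 1, c2 + 1),
      by simp⟩,
    ⟨s((c1, c2 + 1), (c1 + 1, c2 + 1)), by simp [cellEdges], by simp, (c1 + 1, c2 + 1),
      by simp⟩,
    ⟨s((c1, c2), (c1 + 1, c2)), by simp [cellEdges], by simp, (c1, c2), by simp⟩,
    ⟨s((c1 + 1, c2), (c1 + 2, c2)), by simp [cellEdges], by simp, (c1 + 2, c2), by simp⟩]

/-- The two points are the end points of the edge shared by `c` and `d` when they are
adjacent. -/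
lemma eq_or_eq_of_mem_cellVerts_inter {c d v : V2} (hc : Even (c.1 + c.2))
    (hd : Even (d.1 + d.2)) (hcd : c ≠ d) (hvc : v ∈ cellVerts c) (hvd : v ∈ cellVerts d) :
    v = (max c.1 d.1, max c.2 d.2) ∨ v = (min c.1 d.1 + 2, min c.2 d.2 + 1) := by
  obtain ⟨m, hm⟩ := hc
  obtain ⟨n, hn⟩ := hd
  rw [mem_cellVerts] at hvc hvd
  rw [ne_eq, Prod.ext_iff] at hcd
  simp only [Prod.ext_iff]
  omega

lemma cellEdges_inter_subsingleton {c d : V2} (hc : Even (c.1 + c.2))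
    (hd : Even (d.1 + d.2)) (hcd : c ≠ d) : (cellEdges c ∩ cellEdges d).Subsingleton := by
  have key : ∀ e ∈ cellEdges c ∩ cellEdges d,
      e = s((max c.1 d.1, max c.2 d.2), (min c.1 d.1 + 2, min c.2 d.2 + 1)) :=
    fun e ⟨hec, hed⟩ => Sym2.eq_mk_of_forall_mem_eq_or_eq (not_isDiag_of_mem_cellEdges hec)
      fun v hv => eq_or_eq_of_mem_cellVerts_inter hc hd hcd
        (mem_cellVerts_of_mem_cellEdges hec hv) (mem_cellVerts_of_mem_cellEdges hed hv)
  exact fun e he f hf => (key e he).trans (key f hf).symm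

lemma cellEdges_inter_nonempty {c d v : V2} (hc : Even (c.1 + c.2)) (hd : Even (d.1 + d.2))
    (hvc : v ∈ cellVerts c) (hvd : v ∈ cellVerts d) :
    (cellEdges c ∩ cellEdges d).Nonempty := by
  obtain ⟨c1, c2⟩ := c
  obtain ⟨d1, d2⟩ := d
  obtain ⟨m, hm⟩ := hc
  obtain ⟨n, hn⟩ := hd
  rw [mem_cellVerts] at hvc hvd
  obtain ⟨rfl, rfl⟩ | ⟨rfl, rfl⟩ | ⟨rfl, rfl⟩ | ⟨rfl, rfl⟩ | ⟨rfl, rfl⟩ | ⟨rfl, rfl⟩ |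
      ⟨rfl, rfl⟩ :
      c1 = d1 ∧ c2 = d2 ∨ d1 = c1 + 2 ∧ c2 = d2 ∨ d1 = c1 - 2 ∧ c2 = d2 ∨
      d1 = c1 + 1 ∧ d2 = c2 + 1 ∨ d1 = c1 + 1 ∧ d2 = c2 - 1 ∨
      d1 = c1 - 1 ∧ d2 = c2 + 1 ∨ d1 = c1 - 1 ∧ d2 = c2 - 1 := by
    simp only at hm hn hvc hvd
    omega
  exacts [⟨s((c1, c2), (c1 + 1, c2)), by simp [cellEdges]⟩,
    ⟨s((c1 + 2, c2), (c1 + 2, c2 + 1)), by simp [cellEdges]⟩,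
    ⟨s((c1, c2), (c1, c2 + 1)), by simp [cellEdges]⟩,
    ⟨s((c1 + 1, c2 + 1), (c1 + 2, c2 + 1)), by simp [cellEdges]; omega⟩,
    ⟨s((c1 + 1, c2), (c1 + 2, c2)), by simp [cellEdges]; omega⟩,
    ⟨s((c1, c2 + 1), (c1 + 1, c2 + 1)), by simp [cellEdges]; omega⟩,
    ⟨s((c1, c2), (c1 + 1, c2)), by simp [cellEdges]; omega⟩]

lemma eq_of_cellEdges_symmDiff_eq {c₁ c₂ c₃ c₄ : V2} (h₁ : Even (c₁.1 + c₁.2))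
    (h₂ : Even (c₂.1 + c₂.2)) (h₃ : Even (c₃.1 + c₃.2)) (h₄ : Even (c₄.1 + c₄.2))
    (h : cellEdges c₁ ∆ cellEdges c₂ = cellEdges c₃ ∆ cellEdges c₄)
    (h₁₂ : c₁ ≠ c₂) (h₁₄ : c₁ ≠ c₄) : c₁ = c₃ := by
  by_contra h₁₃
  set E := cellEdges c₁
  have hcover : E ⊆ (E ∩ cellEdges c₂) ∪ (E ∩ cellEdges c₃) ∪ (E ∩ cellEdges c₄) := by
    intro e he
    by_cases he₂ : e ∈ cellEdges c₂
    · exact Or.inl (Or.inl ⟨he, he₂⟩)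
    · have : e ∈ cellEdges c₃ ∆ cellEdges c₄ := h ▸ mem_symmDiff.mpr (Or.inl ⟨he, he₂⟩)
      rcases mem_symmDiff.mp this with ⟨he₃, -⟩ | ⟨he₄, -⟩
      exacts [Or.inl (Or.inr ⟨he, he₃⟩), Or.inr ⟨he, he₄⟩]
  have hs₂ := cellEdges_inter_subsingleton h₁ h₂ h₁₂
  have hs₃ := cellEdges_inter_subsingleton h₁ h₃ h₁₃
  have hs₄ := cellEdges_inter_subsingleton h₁ h₄ h₁₄
  have : E.ncard ≤ 3 := calc
    E.ncard ≤ ((E ∩ cellEdges c₂) ∪ (E ∩ cellEdges c₃) ∪ (E ∩ cellEdges c₄)).ncard :=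
      ncard_le_ncard hcover ((hs₂.finite.union hs₃.finite).union hs₄.finite)
    _ ≤ (E ∩ cellEdges c₂).ncard + (E ∩ cellEdges c₃).ncard + (E ∩ cellEdges c₄).ncard :=
      (ncard_union_le _ _).trans (by gcongr; exact ncard_union_le _ _)
    _ ≤ 1 + 1 + 1 := by
      gcongr
      exacts [(ncard_le_one hs₂.finite).mpr hs₂, (ncard_le_one hs₃.finite).mpr hs₃,
        (ncard_le_one hs₄.finite).mpr hs₄]
  rw [ncard_cellEdges] at this
  omega

theorem PM.mem_iff_notMem_of_mem_symmDiff {V C : Type*} {cv : C → Set V}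
    {ce : C → Set (Sym2 V)} {B : Set C} (M N : PM cv ce B) {e f : Sym2 V}
    (he : e ∈ M.val ∆ N.val) (hf : f ∈ M.val ∆ N.val) (hef : e ≠ f) {v : V} (hve : v ∈ e)
    (hvf : v ∈ f) : e ∈ M.val ↔ f ∉ M.val := by
  have hM := fun he hf => M.2.2.1 e he f hf hef v hve hvf
  have hN := fun he hf => N.2.2.1 e he f hf hef v hve hvf
  rw [mem_symmDiff] at he hf
  tauto

section Resonance

variable {B : Set V2}

theorem symmDiff_eq_cellEdges_of_square (hB : ∀ c ∈ B, Even (c.1 + c.2))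
    {M₁ M₂ M₃ M₄ : PM cellVerts cellEdges B} {c : V2} (hc : c ∈ B)
    (h₁₂ : M₁.val ∆ M₂.val = cellEdges c) (h₂₃ : (resGraph cellVerts cellEdges B).Adj M₂ M₃)
    (h₃₄ : (resGraph cellVerts cellEdges B).Adj M₃ M₄)
    (h₄₁ : (resGraph cellVerts cellEdges B).Adj M₄ M₁) (h₁₃ : M₁ ≠ M₃) (h₂₄ : M₂ ≠ M₄) :
    M₃.val ∆ M₄.val = cellEdges c := by
  obtain ⟨-, c₂, hc₂, h₂₃⟩ := h₂₃
  obtain ⟨-, c₃, hc₃, h₃₄⟩ := h₃₄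
  obtain ⟨-, c₄, hc₄, h₄₁⟩ := h₄₁
  have h₁₃' : M₁.val ∆ M₃.val = cellEdges c ∆ cellEdges c₂ := by
    rw [← h₁₂, ← h₂₃, symmDiff_assoc, symmDiff_symmDiff_cancel_left]
  have h₄₂ : M₄.val ∆ M₂.val = cellEdges c₄ ∆ cellEdges c := by
    rw [← h₄₁, ← h₁₂, symmDiff_assoc, symmDiff_symmDiff_cancel_left]
  have h₃₁ : M₃.val ∆ M₁.val = cellEdges c₃ ∆ cellEdges c₄ := by
    rw [← h₃₄, ← h₄₁, symmDiff_assoc, symmDiff_symmDiff_cancel_left]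
  suffices c = c₃ by rw [h₃₄, this]
  refine eq_of_cellEdges_symmDiff_eq (hB c hc) (hB c₂ hc₂) (hB c₃ hc₃) (hB c₄ hc₄)
    (by rw [← h₁₃', ← h₃₁, symmDiff_comm]) ?_ ?_
  · rintro rfl
    exact h₁₃ (Subtype.ext (symmDiff_eq_bot.mp (by rw [h₁₃', symmDiff_self])))
  · rintro rfl
    exact h₂₄ (Subtype.ext (symmDiff_eq_bot.mp (by rw [h₄₂, symmDiff_self])).symm)

theorem cellVerts_inter_eq_empty_of_resonance_path (hB : ∀ c ∈ B, Even (c.1 + c.2))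
    {M₁ M₂ M₃ M₄ : PM cellVerts cellEdges B} {c d : V2} (hc : c ∈ B) (hd : d ∈ B)
    (h₁₂ : M₁.val ∆ M₂.val = cellEdges c) (h₂₃ : M₂.val ∆ M₃.val = cellEdges d)
    (h₃₄ : M₃.val ∆ M₄.val = cellEdges c) (h₁₃ : M₁ ≠ M₃) :
    cellVerts c ∩ cellVerts d = ∅ := by
  have hcd : c ≠ d := by
    rintro rfl
    refine h₁₃ (Subtype.ext (symmDiff_eq_bot.mp ?_))
    rw [← symmDiff_symmDiff_cancel_left M₂.val M₃.val, ← symmDiff_assoc, h₁₂, h₂₃,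
      symmDiff_self]
  by_contra hne
  obtain ⟨v, hvc, hvd⟩ := nonempty_iff_ne_empty.mpr hne
  obtain ⟨e, hec, hed⟩ := cellEdges_inter_nonempty (hB c hc) (hB d hd) hvc hvd
  obtain ⟨f, hfc, hfe, w, hwe, hwf⟩ := exists_adjacent_mem_cellEdges hec
  have hfd : f ∉ cellEdges d := fun hfd =>
    hfe (cellEdges_inter_subsingleton (hB c hc) (hB d hd) hcd ⟨hfc, hfd⟩ ⟨hec, hed⟩)
  have alt₂ : e ∈ M₂.val ↔ f ∉ M₂.val := by
    rw [symmDiff_comm] at h₁₂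
    exact PM.mem_iff_notMem_of_mem_symmDiff M₂ M₁ (h₁₂ ▸ hec) (h₁₂ ▸ hfc) hfe.symm hwe hwf
  have alt₃ : e ∈ M₃.val ↔ f ∉ M₃.val :=
    PM.mem_iff_notMem_of_mem_symmDiff M₃ M₄ (h₃₄ ▸ hec) (h₃₄ ▸ hfc) hfe.symm hwe hwf
  have he₂₃ : e ∈ M₂.val ∆ M₃.val := h₂₃ ▸ hed
  have hf₂₃ : f ∉ M₂.val ∆ M₃.val := h₂₃ ▸ hfd
  rw [mem_symmDiff] at he₂₃ hf₂₃
  tauto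

theorem cellVerts_inter_eq_empty_of_grid (hB : ∀ c ∈ B, Even (c.1 + c.2))
    (g : (pathGraph 3).boxProd (pathGraph 3) →g resGraph cellVerts cellEdges B)
    (hg : Function.Injective g) {c d : V2} (hc : c ∈ B) (hd : d ∈ B)
    (hgc : (g (1, 0)).val ∆ (g (2, 0)).val = cellEdges c)
    (hgd : (g (0, 1)).val ∆ (g (0, 2)).val = cellEdges d) :
    cellVerts c ∩ cellVerts d = ∅ := by
  have hd₁ : (g (1, 2)).val ∆ (g (1, 1)).val = cellEdges d := by
    refine symmDiff_eq_cellEdges_of_square hB hd hgd (g.map_adj ?_) (g.map_adj ?_)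
      (g.map_adj ?_) (hg.ne ?_) (hg.ne ?_) <;> simp [boxProd_adj, pathGraph_adj]
  have hc₁ : (g (2, 1)).val ∆ (g (1, 1)).val = cellEdges c := by
    refine symmDiff_eq_cellEdges_of_square hB hc hgc (g.map_adj ?_) (g.map_adj ?_)
      (g.map_adj ?_) (hg.ne ?_) (hg.ne ?_) <;> simp [boxProd_adj, pathGraph_adj]
  have hd₂ : (g (2, 1)).val ∆ (g (2, 2)).val = cellEdges d := by
    refine symmDiff_eq_cellEdges_of_square hB hd hd₁ (g.map_adj ?_) (g.map_adj ?_)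
      (g.map_adj ?_) (hg.ne ?_) (hg.ne ?_) <;> simp [boxProd_adj, pathGraph_adj]
  rw [inter_comm]
  exact cellVerts_inter_eq_empty_of_resonance_path hB hd hc hd₁
    (by rw [symmDiff_comm, hc₁]) hd₂ (hg.ne (by simp))

end Resonance

def gridPoint (k : ℕ) {l : ℕ} (i j : Fin l) (p : Fin 3 × Fin 3) :
    (Fin k → Fin 2) × (Fin l → Fin 3) :=
  (fun _ => 0, fun m => if m = i then p.1 else if m = j then p.2 else 0)

def gridHom (k : ℕ) {l : ℕ} {i j : Fin l} (hij : i ≠ j) :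
    (pathGraph 3).boxProd (pathGraph 3) →g tupleGraph k l where
  toFun := gridPoint k i j
  map_rel' := by
    rintro ⟨a, b⟩ ⟨a', b'⟩ h
    rw [boxProd_adj, pathGraph_adj, pathGraph_adj] at h
    rcases h with ⟨hab, rfl⟩ | ⟨hab, rfl⟩
    · refine Or.inr ⟨i, ?_, fun m hm => by simp [gridPoint, hm], rfl⟩
      simp only [gridPoint, ite_true] at hab ⊢
      omega
    · refine Or.inr ⟨j, ?_, fun m hm => ?_, rfl⟩
      · simp only [gridPoint, if_neg hij.symm, ite_true] at hab ⊢
        omega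
      · by_cases hmi : m = i <;> simp [gridPoint, hmi, hm]

lemma gridHom_injective (k : ℕ) {l : ℕ} {i j : Fin l} (hij : i ≠ j) :
    Function.Injective (gridHom k hij) := by
  rintro ⟨a, b⟩ ⟨a', b'⟩ h
  have hi := congrFun (congrArg Prod.snd h) i
  have hj := congrFun (congrArg Prod.snd h) j
  simp only [gridHom, RelHom.coeFn_mk, gridPoint, if_pos, if_neg hij.symm] at hi hj
  rw [hi, hj]

theorem hexagon_primes_pairwise_disjoint_general (B : Set V2) (hB : IsBenzenoid B) (k l : ℕ)
    (S : Set (PM cellVerts cellEdges B))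
    (φ : tupleGraph k l ≃g (resGraph cellVerts cellEdges B).induce S)
    (h' : Fin l → V2) (hh'B : ∀ i, h' i ∈ B)
    (hhex' : ∀ i : Fin l,
      (φ (fun _ => 0, fun j => if j = i then 1 else 0)).val.val ∆
        (φ (fun _ => 0, fun j => if j = i then 2 else 0)).val.val = cellEdges (h' i)) :
    ∀ i j : Fin l, i ≠ j → cellVerts (h' i) ∩ cellVerts (h' j) = ∅ := by
  intro i j hij
  have hNi : ∀ a : Fin 3,
      gridPoint k i j (a, 0) = (fun _ => 0, fun m => if m = i then a else 0) :=
    fun a => Prod.ext rfl (funext fun m => by by_cases hm : m = i <;> simp [gridPoint, hm])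
  have hNj : ∀ b : Fin 3,
      gridPoint k i j (0, b) = (fun _ => 0, fun m => if m = j then b else 0) :=
    fun b => Prod.ext rfl (funext fun m => by
      by_cases hm : m = i
      · simp [gridPoint, hm, hij]
      · simp [gridPoint, hm])
  let f : tupleGraph k l ↪g resGraph cellVerts cellEdges B :=
    φ.toEmbedding.trans (Embedding.induce S)
  refine cellVerts_inter_eq_empty_of_grid hB.2.2.1 (f.toHom.comp (gridHom k hij))
    (f.injective.comp (gridHom_injective k hij)) (hh'B i) (hh'B j) ?_ ?_
  · simpa [f, gridHom, hNi] using hhex' i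
  · simpa [f, gridHom, hNj] using hhex' j

/-- **Claim 4.** With `hᵢ'` the hexagon of `G` satisfying `Nⁱ ⊕ Oⁱ = E(hᵢ')`
for `i ∈ {k+1, …, k+l}` (where `Nⁱ`, `Oⁱ` are the vertices of the induced convex subgraph
`Q ≅ Q_{k,l}` of the resonance graph with `1`, resp. `2`, in position `i` and `0`
elsewhere), the hexagons `hᵢ'` are pairwise vertex-disjoint. -/
theorem hexagon_primes_pairwise_disjoint (B : Set V2) (hB : IsBenzenoid B)
    (hex : ∃ M, IsPM cellVerts cellEdges B M) (k l : ℕ)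
    (S : Set (PM cellVerts cellEdges B))
    (hconv : IsConvex (resGraph cellVerts cellEdges B) S)
    (φ : tupleGraph k l ≃g (resGraph cellVerts cellEdges B).induce S)
    (h' : Fin l → V2) (hh'B : ∀ i, h' i ∈ B)
    (hhex' : ∀ i : Fin l,
      (φ (fun _ => 0, fun j => if j = i then 1 else 0)).val.val ∆
        (φ (fun _ => 0, fun j => if j = i then 2 else 0)).val.val = cellEdges (h' i)) :
    ∀ i j : Fin l, i ≠ j → cellVerts (h' i) ∩ cellVerts (h' j) = ∅ :=
  hexagon_primes_pairwise_disjoint_general B hB k l S φ h' hh'B hhex'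

end GZZ
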